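/- If M is a matching with |M| = 3 whose intersection graph is a 3-cycle (all pairs intersect), and M' ⊇ M is a matching in which every edge intersects at most 2 others of M', then every edge of M' \ M is comparable (under ≺) to every edge of M; in particular M is a full connected component of H[M']. -/

import Mathlib

def inter (e f : ℕ × ℕ) : Prop :=
  (e.1 < f.1 ∧ f.2 < e.2) ∨ (f.1 < e.1 ∧ e.2 < f.2)

def eprec (e f : ℕ × ℕ) : Prop := e.1 < f.1 ∧ e.2 < f.2

def IsMatching (M : Set (ℕ × ℕ)) : Prop :=
  ∀ e ∈ M, ∀ f ∈ M, e ≠ f → e.1 ≠ f.1 ∧ e.2 ≠ f.2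

/-! Each edge of the triangle already intersects the other two, so by the 2-CPE condition it
intersects no further edge of `M'`. Two edges of a matching that do not intersect differ in both
coordinates and are not crossed, hence one precedes the other. -/

theorem inter_comm {e f : ℕ × ℕ} : inter e f ↔ inter f e := by
  unfold inter; tauto

theorem ne_of_inter {e f : ℕ × ℕ} (h : inter e f) : e ≠ f := by
  rintro rfl
  rcases h with ⟨h, -⟩ | ⟨h, -⟩ <;> exact lt_irrefl _ h

theorem eprec_or_eprec_of_not_inter {e f : ℕ × ℕ} (h1 : e.1 ≠ f.1) (h2 : e.2 ≠ f.2)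
    (h : ¬ inter e f) : eprec e f ∨ eprec f e := by
  simp only [inter, eprec, not_or, not_and] at *
  omega

theorem IsMatching.eprec_or_eprec_of_not_inter {M : Set (ℕ × ℕ)} (hM : IsMatching M)
    {e f : ℕ × ℕ} (he : e ∈ M) (hf : f ∈ M) (hef : e ≠ f) (h : ¬ inter e f) :
    eprec e f ∨ eprec f e :=
  _root_.eprec_or_eprec_of_not_inter (hM e he f hf hef).1 (hM e he f hf hef).2 h

theorem not_inter_of_inter_of_inter {M' : Set (ℕ × ℕ)}
    (h2cpe : ∀ e ∈ M', ∀ f ∈ M', ∀ g ∈ M', ∀ h ∈ M',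
      inter e f → inter e g → inter e h → f ≠ g → f ≠ h → g ≠ h → False)
    {e g h f : ℕ × ℕ} (he : e ∈ M') (hg : g ∈ M') (hh : h ∈ M') (hf : f ∈ M')
    (heg : inter e g) (heh : inter e h) (hgh : inter g h) (hfg : f ≠ g) (hfh : f ≠ h) :
    ¬ inter e f := fun hef =>
  h2cpe e he g hg h hh f hf heg heh hef (ne_of_inter hgh) hfg.symm hfh.symm

theorem triangle_is_component (M' : Set (ℕ × ℕ)) (hM' : IsMatching M')
    (h2cpe : ∀ e ∈ M', ∀ f ∈ M', ∀ g ∈ M', ∀ h ∈ M',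
      inter e f → inter e g → inter e h → f ≠ g → f ≠ h → g ≠ h → False)
    (e1 e2 e3 : ℕ × ℕ) (h1 : e1 ∈ M') (h2 : e2 ∈ M') (h3 : e3 ∈ M')
    (h12 : inter e1 e2) (h13 : inter e1 e3) (h23 : inter e2 e3) :
    ∀ f ∈ M', f ∉ ({e1, e2, e3} : Set (ℕ × ℕ)) →
      (eprec f e1 ∨ eprec e1 f) ∧ (eprec f e2 ∨ eprec e2 f) ∧
      (eprec f e3 ∨ eprec e3 f) := by
  intro f hf hfn
  simp only [Set.mem_insert_iff, Set.mem_singleton_iff, not_or] at hfn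
  obtain ⟨hf1, hf2, hf3⟩ := hfn
  have comparable : ∀ e ∈ M', f ≠ e → ¬ inter e f → eprec f e ∨ eprec e f :=
    fun e he hfe hef => hM'.eprec_or_eprec_of_not_inter hf he hfe (mt inter_comm.mp hef)
  refine ⟨comparable e1 h1 hf1 ?_, comparable e2 h2 hf2 ?_, comparable e3 h3 hf3 ?_⟩
  · exact not_inter_of_inter_of_inter h2cpe h1 h2 h3 hf h12 h13 h23 hf2 hf3
  · exact not_inter_of_inter_of_inter h2cpe h2 h1 h3 hf (inter_comm.mp h12) h23 h13 hf1 hf3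
  · exact not_inter_of_inter_of_inter h2cpe h3 h1 h2 hf (inter_comm.mp h13)
      (inter_comm.mp h23) h12 hf1 hf2
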